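/- Let S be a nondegenerate connected q-shape over an infinite set X. Then there exists a nondegenerate connected centric q-shape S' with ∂S' = ∂S. (Centric means: whenever two vertices of ∂S both lie in the boundary's vertex set and are joined by an edge of S, they are joined by an edge of ∂S.) The construction: given a 'bad' pair x₀, x₁ ∈ (∂S)^{(0)} with (x₀,x₁) ∈ S^{(1)} \ (∂S)^{(1)}, choose fresh vertices y₀, y₁ ∉ S^{(0)} and set S' := S₀' + S₁' − S₂', where S₀' replaces x₁ by y₁, S₁' replaces x₀ by y₀, and S₂' replaces both; then ∂S' = ∂S and the number of bad pairs decreases. -/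

import Mathlib

/-- `q`-shapes on the set `V`: elements of `ℤ[V^{q+1}]`. -/
abbrev Ch (V : Type*) (q : ℕ) := (Fin (q + 1) → V) →₀ ℤ

/-- The simplicial boundary map. -/
noncomputable def bd (V : Type*) (q : ℕ) : Ch V (q + 1) →ₗ[ℤ] Ch V q :=
  Finsupp.lift (Ch V q) ℤ (Fin (q + 2) → V) fun f =>
    ∑ i : Fin (q + 2), ((-1 : ℤ) ^ (i : ℕ)) • Finsupp.single (f ∘ i.succAbove) 1

/-- The vertex set `S^{(0)}` of a shape. -/
def S0 {V : Type*} {q : ℕ} (S : Ch V q) : Set V :=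
  {x | ∃ f ∈ S.support, ∃ i, f i = x}

/-- The edge set `S^{(1)}` of a shape. -/
def S1 {V : Type*} {q : ℕ} (S : Ch V q) : Set (V × V) :=
  {p | ∃ f ∈ S.support, ∃ i j, f i = p.1 ∧ f j = p.2}

/-- A shape is connected if it is nonzero and the graph `(S^{(0)}, S^{(1)})`
is connected. -/
def ShConn {V : Type*} {q : ℕ} (S : Ch V q) : Prop :=
  S ≠ 0 ∧ ∀ x ∈ S0 S, ∀ y ∈ S0 S,
    Relation.ReflTransGen (fun a b : V => (a, b) ∈ S1 S) x y

/-- A shape is nondegenerate if all tuples in its support have pairwise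
distinct entries. -/
def Nondeg {V : Type*} {q : ℕ} (S : Ch V q) : Prop :=
  ∀ f ∈ S.support, Function.Injective f

/-- A shape `S` is centric if every edge of `S` between two vertices of `∂S`
is already an edge of `∂S`. -/
def Centric {V : Type*} {q : ℕ} (S : Ch V (q + 1)) : Prop :=
  ∀ p ∈ S1 S, p.1 ∈ S0 (bd V q S) → p.2 ∈ S0 (bd V q S) → p ∈ S1 (bd V q S)

/-!
If `∂S = 0` then `S` itself is centric. Otherwise choose a vertex `v ∉ S^{(0)}` and take the cone
`S' = v * ∂S`. The cone identity `∂(v * T) = T - v * ∂T` and `∂∂ = 0` give `∂S' = ∂S`. Every vertex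
of `S'` is joined to the apex, so `S'` is connected; `v` is fresh, so `S'` is nondegenerate; and an
edge of `S'` not through `v` is an edge of `∂S`, so `S'` is centric.
-/

namespace Shape

variable {V : Type*}

/-- The boundary map extended to all degrees; in degree `0` it is the augmentation, which makes the
cone identity `augBd_cone` hold uniformly, including for `q = 0`. -/
noncomputable def augBd (V : Type*) (q : ℕ) :
    ((Fin (q + 1) → V) →₀ ℤ) →ₗ[ℤ] ((Fin q → V) →₀ ℤ) :=
  Finsupp.lift _ ℤ _ fun f =>
    ∑ i : Fin (q + 1), ((-1 : ℤ) ^ (i : ℕ)) • Finsupp.single (f ∘ i.succAbove) 1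

theorem bd_eq_augBd (q : ℕ) : bd V q = augBd V (q + 1) := rfl

noncomputable def cone (v : V) (q : ℕ) :
    ((Fin q → V) →₀ ℤ) →ₗ[ℤ] ((Fin (q + 1) → V) →₀ ℤ) :=
  Finsupp.lmapDomain ℤ ℤ fun f : Fin q → V => Fin.cons v f

theorem augBd_single (q : ℕ) (f : Fin (q + 1) → V) (c : ℤ) :
    augBd V q (Finsupp.single f c)
      = c • ∑ i : Fin (q + 1), ((-1 : ℤ) ^ (i : ℕ)) • Finsupp.single (f ∘ i.succAbove) 1 := by
  simp [augBd]

theorem cone_single (v : V) (q : ℕ) (f : Fin q → V) (c : ℤ) :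
    cone v q (Finsupp.single f c) = Finsupp.single (Fin.cons v f) c := by
  simp [cone]

theorem augBd_cone (v : V) (q : ℕ) (T : (Fin (q + 1) → V) →₀ ℤ) :
    augBd V (q + 1) (cone v (q + 1) T) = T - cone v q (augBd V q T) := by
  suffices h : (augBd V (q + 1)).comp (cone v (q + 1))
      = LinearMap.id - (cone v q).comp (augBd V q) from LinearMap.congr_fun h T
  refine Finsupp.lhom_ext fun f c => ?_
  have hzero : (Fin.cons v f : Fin (q + 2) → V) ∘ Fin.succAbove 0 = f := rfl
  simp only [LinearMap.comp_apply, LinearMap.sub_apply, LinearMap.id_apply, cone_single,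
    augBd_single, Fin.sum_univ_succ (n := q + 1), hzero, Fin.cons_comp_succ_succAbove, map_smul,
    map_sum, Fin.val_zero, pow_zero, one_smul, Fin.val_succ, pow_succ, mul_neg_one, neg_smul,
    Finset.sum_neg_distrib, smul_add, smul_neg]
  rw [Finsupp.smul_single_one, sub_eq_add_neg]
  rfl

/-- Every generator is a cone, so `∂∂ = 0` follows from `augBd_cone` by induction on `q`. -/
theorem augBd_comp_augBd (q : ℕ) : (augBd V q).comp (augBd V (q + 1)) = 0 := by
  induction q with
  | zero =>
    refine Finsupp.lhom_ext fun f c => ?_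
    simp [augBd_single, Fin.sum_univ_two, add_neg_eq_zero]
  | succ q ih =>
    refine Finsupp.lhom_ext fun f c => ?_
    rw [← Fin.cons_self_tail f, ← cone_single, LinearMap.comp_apply, augBd_cone, map_sub,
      augBd_cone, sub_sub_cancel, ← LinearMap.comp_apply (augBd V q), ih, LinearMap.zero_apply,
      map_zero, LinearMap.zero_apply]

theorem bd_cone_bd (v : V) {q : ℕ} (S : Ch V (q + 1)) :
    bd V q (cone v (q + 1) (bd V q S)) = bd V q S := by
  rw [bd_eq_augBd, augBd_cone, ← LinearMap.comp_apply (augBd V q), augBd_comp_augBd,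
    LinearMap.zero_apply, map_zero, sub_zero]

theorem exists_of_mem_support_augBd {q : ℕ} {T : (Fin (q + 1) → V) →₀ ℤ} {g : Fin q → V}
    (hg : g ∈ (augBd V q T).support) :
    ∃ f ∈ T.support, ∃ i : Fin (q + 1), g = f ∘ i.succAbove := by
  classical
  rw [augBd, Finsupp.lift_apply] at hg
  obtain ⟨f, hf, hg⟩ := Finset.mem_biUnion.1 (Finsupp.support_sum hg)
  obtain ⟨i, -, hg⟩ := Finset.mem_biUnion.1 (Finsupp.support_finsetSum (Finsupp.support_smul hg))
  exact ⟨f, hf, i,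
    Finset.mem_singleton.1 (Finsupp.support_single_subset (Finsupp.support_smul hg))⟩

theorem exists_of_mem_support_cone {v : V} {q : ℕ} {T : (Fin q → V) →₀ ℤ}
    {f : Fin (q + 1) → V} (hf : f ∈ (cone v q T).support) : ∃ g ∈ T.support, Fin.cons v g = f := by
  classical
  exact Finset.mem_image.1 (Finsupp.mapDomain_support hf)

theorem S0_finite {q : ℕ} (S : Ch V q) : (S0 S).Finite := by
  refine (S.support.finite_toSet.biUnion fun f _ => Set.finite_range f).subset ?_
  rintro x ⟨f, hf, i, rfl⟩
  exact Set.mem_biUnion hf ⟨i, rfl⟩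

theorem S0_zero {q : ℕ} : S0 (0 : Ch V q) = ∅ := by
  simp [S0]

theorem S0_bd_subset {q : ℕ} (S : Ch V (q + 1)) : S0 (bd V q S) ⊆ S0 S := by
  rintro x ⟨g, hg, i, rfl⟩
  obtain ⟨f, hf, j, rfl⟩ := exists_of_mem_support_augBd hg
  exact ⟨f, hf, j.succAbove i, rfl⟩

theorem Nondeg.bd {q : ℕ} {S : Ch V (q + 1)} (hS : Nondeg S) : Nondeg (bd V q S) := by
  intro g hg
  obtain ⟨f, hf, i, rfl⟩ := exists_of_mem_support_augBd hg
  exact (hS f hf).comp Fin.succAbove_right_injective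

theorem Nondeg.cone {q : ℕ} {T : Ch V q} {v : V} (hT : Nondeg T) (hv : v ∉ S0 T) :
    Nondeg (cone v (q + 1) T) := by
  intro f hf
  obtain ⟨g, hg, rfl⟩ := exists_of_mem_support_cone hf
  exact Fin.cons_injective_of_injective (fun ⟨i, hi⟩ => hv ⟨g, hg, i, hi⟩) (hT g hg)

theorem shConn_cone {q : ℕ} {T : Ch V q} (v : V) (hT : T ≠ 0) : ShConn (cone v (q + 1) T) := by
  have hadj : ∀ x ∈ S0 (cone v (q + 1) T),
      (x, v) ∈ S1 (cone v (q + 1) T) ∧ (v, x) ∈ S1 (cone v (q + 1) T) := by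
    rintro x ⟨f, hf, i, rfl⟩
    have hf0 : f 0 = v := by
      obtain ⟨g, -, rfl⟩ := exists_of_mem_support_cone hf
      rfl
    exact ⟨⟨f, hf, i, 0, rfl, hf0⟩, ⟨f, hf, 0, i, hf0, rfl⟩⟩
  refine ⟨fun h => hT ?_, fun x hx y hy => .head (hadj x hx).1 (.single (hadj y hy).2)⟩
  exact Finsupp.mapDomain_injective (Fin.cons_right_injective (α := fun _ => V) v)
    (h.trans Finsupp.mapDomain_zero.symm)

theorem S1_cone_subset {q : ℕ} {T : Ch V q} {v : V} {p : V × V} (hp : p ∈ S1 (cone v (q + 1) T))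
    (h1 : p.1 ≠ v) (h2 : p.2 ≠ v) : p ∈ S1 T := by
  obtain ⟨f, hf, i, j, hi, hj⟩ := hp
  obtain ⟨g, hg, rfl⟩ := exists_of_mem_support_cone hf
  obtain ⟨i, rfl⟩ := Fin.exists_succ_eq_of_ne_zero (x := i) (by rintro rfl; exact h1 hi.symm)
  obtain ⟨j, rfl⟩ := Fin.exists_succ_eq_of_ne_zero (x := j) (by rintro rfl; exact h2 hj.symm)
  exact ⟨g, hg, i, j, hi, hj⟩

theorem centric_of_bd_eq_zero {q : ℕ} {S : Ch V (q + 1)} (hS : bd V q S = 0) : Centric S := by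
  intro p _ h1
  rw [hS, S0_zero] at h1
  exact h1.elim

theorem centric_cone_bd {q : ℕ} {S : Ch V (q + 1)} {v : V} (hv : v ∉ S0 (bd V q S)) :
    Centric (cone v (q + 1) (bd V q S)) := by
  intro p hp h1 h2
  rw [bd_cone_bd] at h1 h2 ⊢
  exact S1_cone_subset hp (fun h => hv (h ▸ h1)) (fun h => hv (h ▸ h2))

end Shape

open Shape

theorem stmt14 {V : Type*} [Infinite V] (q : ℕ) (S : Ch V (q + 1))
    (hnd : Nondeg S) (hconn : ShConn S) :
    ∃ S' : Ch V (q + 1),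
      Nondeg S' ∧ ShConn S' ∧ Centric S' ∧ bd V q S' = bd V q S := by
  by_cases hb : bd V q S = 0
  · exact ⟨S, hnd, hconn, centric_of_bd_eq_zero hb, rfl⟩
  obtain ⟨v, hv⟩ := (S0_finite S).infinite_compl.nonempty
  have hvb : v ∉ S0 (bd V q S) := fun h => hv (S0_bd_subset S h)
  refine ⟨cone v (q + 1) (bd V q S), hnd.bd.cone hvb, shConn_cone v hb, centric_cone_bd hvb,
    bd_cone_bd v S⟩
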